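/- arXiv:math/0210022 — 2 statements merged into one kernel-verified Lean document; each statement's English description precedes it below -/
import Mathlib

section
/- Let π : E → B be a fiber bundle with fiber F, B connected and locally connected, and F having exactly k connected components, each of which is preserved setwise by the transition homeomorphisms (i.e., the structure group acts trivially on π₀(F)). Then E has exactly k connected components, and π restricted to each component of E is a fiber bundle over B whose fiber is the corresponding component of F. -/
/-!
Reading off the connected component of the fiber coordinate in any trivialization gives, by the
hypothesis on the transition maps, a well-defined continuous map `φ : E → π₀(F)` that hits every
component over every base point. Over a connected open `V` inside a trivializing set,
`φ⁻¹(c) ∩ π⁻¹(V)` is the image of `V × c`, hence preconnected; as `B` is connected and locally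
connected, the component of `E` met by `φ⁻¹(c)` over `b` is locally constant in `b`, hence
constant. So the components of `E` are exactly the fibers of `φ`, and each is cut out of every
trivialization by a component of `F`.
-/

/-- `π : E → B` is a fiber bundle with fiber `F`: it is continuous and every point of the
base has an open neighborhood `U` with a homeomorphism `π ⁻¹' U ≃ₜ U × F` commuting with
the projections. -/
def IsFiberBundleWithFiber {E B : Type*} (F : Type*) [TopologicalSpace E]
    [TopologicalSpace B] [TopologicalSpace F] (π : E → B) : Prop :=
  Continuous π ∧ ∀ b : B, ∃ U : Set B, IsOpen U ∧ b ∈ U ∧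
    ∃ e : (π ⁻¹' U) ≃ₜ U × F, ∀ z : π ⁻¹' U, ((e z).1 : B) = π z

open Set Function

section ComponentsViaBase

variable {X B Y : Type*} [TopologicalSpace X] [TopologicalSpace B] [TopologicalSpace Y]

theorem connectedComponent_eq_of_locally_isPreconnected [PreconnectedSpace B] {p : X → B}
    {S : Set X} (hS : ∀ b, ∃ x ∈ S, p x = b)
    (hloc : ∀ b, ∃ V : Set B, IsOpen V ∧ b ∈ V ∧ IsPreconnected (S ∩ p ⁻¹' V))
    {x y : X} (hx : x ∈ S) (hy : y ∈ S) : connectedComponent x = connectedComponent y := by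
  choose s hsS hsp using hS
  choose V hVo hbV hVc using hloc
  have hlocal : ∀ b, ∀ w ∈ S, p w ∈ V b →
      (w : ConnectedComponents X) = (s b : ConnectedComponents X) := fun b w hw hwV =>
    ConnectedComponents.coe_eq_coe'.2 <|
      (hVc b).subset_connectedComponent ⟨hsS b, by simp only [mem_preimage, hsp, hbV]⟩ ⟨hw, hwV⟩
  have hconst : IsLocallyConstant fun b => (s b : ConnectedComponents X) :=
    (IsLocallyConstant.iff_exists_open _).2 fun b =>
      ⟨V b, hVo b, hbV b, fun b' hb' => hlocal b (s b') (hsS b') (by rwa [hsp])⟩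
  rw [← ConnectedComponents.coe_eq_coe, hlocal _ x hx (hbV _), hlocal _ y hy (hbV _)]
  exact hconst.apply_eq_of_preconnectedSpace _ _

variable [TotallyDisconnectedSpace Y] {f : X → Y}

theorem Continuous.connectedComponent_eq_preimage (hf : Continuous f)
    (hfib : ∀ x y, f x = f y → connectedComponent x = connectedComponent y) (x : X) :
    connectedComponent x = f ⁻¹' {f x} := by
  refine Subset.antisymm (image_subset_iff.1 (hf.image_connectedComponent_eq_singleton x).le)
    fun y hy => ?_
  rw [hfib x y hy.symm]
  exact mem_connectedComponent

theorem Continuous.connectedComponentsLift_bijective (hf : Continuous f) (hsurj : Surjective f)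
    (hfib : ∀ x y, f x = f y → connectedComponent x = connectedComponent y) :
    Bijective hf.connectedComponentsLift := by
  refine ⟨fun a b hab => ?_, fun y => ?_⟩
  · obtain ⟨x, rfl⟩ := ConnectedComponents.surjective_coe a
    obtain ⟨y, rfl⟩ := ConnectedComponents.surjective_coe b
    rw [hf.connectedComponentsLift_apply_coe, hf.connectedComponentsLift_apply_coe] at hab
    exact ConnectedComponents.coe_eq_coe.2 (hfib x y hab)
  · obtain ⟨x, rfl⟩ := hsurj y
    exact ⟨x, hf.connectedComponentsLift_apply_coe x⟩

end ComponentsViaBase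

section Trivialization

variable {E B F : Type*} [TopologicalSpace E] [TopologicalSpace B] [TopologicalSpace F]
  {π : E → B} {W : Set B} (e : π ⁻¹' W ≃ₜ W × F) {S : Set E} {T : Set F}
  (hST : ∀ x : π ⁻¹' W, (x : E) ∈ S ↔ (e x).2 ∈ T)

def Homeomorph.restrictTrivialization :
    ((fun w : S => π w) ⁻¹' W) ≃ₜ W × T where
  toFun w := ((e ⟨w.1, w.2⟩).1, ⟨(e ⟨w.1, w.2⟩).2, (hST _).1 w.1.2⟩)
  invFun p := ⟨⟨e.symm (p.1, p.2), (hST _).2 (by simp)⟩, (e.symm (p.1, p.2)).2⟩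
  left_inv w := by ext; simp
  right_inv p := by ext <;> simp
  continuous_toFun := by
    have h : Continuous fun w : (fun w : S => π w) ⁻¹' W => e ⟨w.1, w.2⟩ :=
      e.continuous.comp (by fun_prop)
    exact h.fst.prodMk (h.snd.subtype_mk _)
  continuous_invFun := by
    have h : Continuous fun p : W × T => e.symm (p.1, p.2) := e.symm.continuous.comp (by fun_prop)
    exact (h.subtype_val.subtype_mk _).subtype_mk _

include hST in
theorem isPreconnected_inter_preimage_of_trivialization (he : ∀ z, ((e z).1 : B) = π z)
    {V : Set B} (hVW : V ⊆ W) (hV : IsPreconnected V) (hT : IsPreconnected T) :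
    IsPreconnected (S ∩ π ⁻¹' V) := by
  have hS : S ∩ π ⁻¹' V = Subtype.val '' (e.symm '' ((Subtype.val ⁻¹' V) ×ˢ T)) := by
    ext w
    constructor
    · rintro ⟨hwS, hwV⟩
      refine ⟨⟨w, hVW hwV⟩, ⟨e ⟨w, hVW hwV⟩, ⟨?_, (hST _).1 hwS⟩, e.symm_apply_apply _⟩, rfl⟩
      simpa [mem_preimage, he] using hwV
    · rintro ⟨_, ⟨p, ⟨hpV, hpT⟩, rfl⟩, rfl⟩
      refine ⟨(hST _).2 (by simpa using hpT), ?_⟩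
      simpa [← he (e.symm p)] using hpV
  have hV' : IsPreconnected ((Subtype.val : W → B) ⁻¹' V) := by
    rwa [← Topology.IsInducing.subtypeVal.isPreconnected_image, Subtype.image_preimage_coe,
      inter_eq_self_of_subset_right hVW]
  rw [hS]
  exact ((hV'.prod hT).image _ e.symm.continuous.continuousOn).image _
    continuous_subtype_val.continuousOn

end Trivialization

theorem isFiberBundleWithFiber_restrict {E B F ι : Type*} [TopologicalSpace E]
    [TopologicalSpace B] [TopologicalSpace F] {π : E → B} (hπ : Continuous π) {U : ι → Set B}
    (hUo : ∀ i, IsOpen (U i)) (hUcov : ∀ b : B, ∃ i, b ∈ U i) (e : ∀ i, (π ⁻¹' U i) ≃ₜ U i × F)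
    (he : ∀ i (z : π ⁻¹' U i), ((e i z).1 : B) = π z) {S : Set E} {T : Set F}
    (hST : ∀ i (x : π ⁻¹' U i), (x : E) ∈ S ↔ (e i x).2 ∈ T) :
    IsFiberBundleWithFiber T (fun w : S => π w) := by
  refine ⟨hπ.comp continuous_subtype_val, fun b => ?_⟩
  obtain ⟨i, hi⟩ := hUcov b
  exact ⟨U i, hUo i, hi, (e i).restrictTrivialization (hST i), fun w => he i _⟩

section FiberComponent

variable {E B F ι : Type*} [TopologicalSpace E] [TopologicalSpace B] [TopologicalSpace F]
  {π : E → B} {U : ι → Set B} (hUcov : ∀ b : B, ∃ i, b ∈ U i) (e : ∀ i, (π ⁻¹' U i) ≃ₜ U i × F)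

noncomputable def fiberComponent (z : E) : ConnectedComponents F :=
  (e (hUcov (π z)).choose ⟨z, (hUcov (π z)).choose_spec⟩).2

variable {hUcov e}
variable (htrans : ∀ i j (z : π ⁻¹' U i) (w : π ⁻¹' U j), (z : E) = (w : E) →
  connectedComponent ((e i z).2) = connectedComponent ((e j w).2))
include htrans

theorem fiberComponent_eq {i : ι} (z : π ⁻¹' U i) :
    fiberComponent hUcov e z = ((e i z).2 : ConnectedComponents F) :=
  ConnectedComponents.coe_eq_coe.2 (htrans _ i _ z rfl)

theorem fiberComponent_eq_coe_iff {i : ι} (z : π ⁻¹' U i) (f : F) :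
    fiberComponent hUcov e z = f ↔ (e i z).2 ∈ connectedComponent f := by
  rw [fiberComponent_eq htrans, ConnectedComponents.coe_eq_coe']

theorem continuous_fiberComponent (hπ : Continuous π) (hUo : ∀ i, IsOpen (U i)) :
    Continuous (fiberComponent hUcov e) := by
  refine continuous_of_cover_nhds (s := fun i => π ⁻¹' U i) (fun z => ⟨(hUcov (π z)).choose,
    ((hUo _).preimage hπ).mem_nhds (hUcov (π z)).choose_spec⟩) fun i => ?_
  rw [continuousOn_iff_continuous_domRestrict]
  have h : (π ⁻¹' U i).domRestrict (fiberComponent hUcov e) =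
      fun z => ((e i z).2 : ConnectedComponents F) := funext (fiberComponent_eq htrans)
  rw [h]
  exact ConnectedComponents.continuous_coe.comp (e i).continuous.snd

theorem exists_fiberComponent_eq_and_eq (he : ∀ i (z : π ⁻¹' U i), ((e i z).1 : B) = π z)
    (c : ConnectedComponents F) (b : B) : ∃ z, fiberComponent hUcov e z = c ∧ π z = b := by
  obtain ⟨f, rfl⟩ := ConnectedComponents.surjective_coe c
  obtain ⟨i, hi⟩ := hUcov b
  set z := (e i).symm (⟨b, hi⟩, f)
  refine ⟨z, by rw [fiberComponent_eq htrans z, (e i).apply_symm_apply], ?_⟩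
  simpa [z] using (he i z).symm

theorem connectedComponent_eq_of_fiberComponent_eq [PreconnectedSpace B]
    [LocallyConnectedSpace B] (hUo : ∀ i, IsOpen (U i))
    (he : ∀ i (z : π ⁻¹' U i), ((e i z).1 : B) = π z) {x y : E}
    (hxy : fiberComponent hUcov e x = fiberComponent hUcov e y) :
    connectedComponent x = connectedComponent y := by
  obtain ⟨f, hf⟩ := ConnectedComponents.surjective_coe (fiberComponent hUcov e y)
  refine connectedComponent_eq_of_locally_isPreconnected (p := π)
    (S := fiberComponent hUcov e ⁻¹' {fiberComponent hUcov e y})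
    (fun b => exists_fiberComponent_eq_and_eq htrans he _ b) (fun b => ?_) hxy rfl
  obtain ⟨i, hi⟩ := hUcov b
  refine ⟨connectedComponentIn (U i) b, (hUo i).connectedComponentIn,
    mem_connectedComponentIn hi, ?_⟩
  refine isPreconnected_inter_preimage_of_trivialization (e i) (T := connectedComponent f)
    (fun z => ?_) (he i) (connectedComponentIn_subset _ _) isPreconnected_connectedComponentIn
    isPreconnected_connectedComponent
  rw [mem_preimage, mem_singleton_iff, ← hf, fiberComponent_eq_coe_iff htrans]

end FiberComponent

/-- let `π : E → B` be a fiber bundle with fiber `F`, given by trivializations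
`e i` over an open cover `U i` of the connected, locally connected base `B`, whose
transition homeomorphisms preserve each connected component of `F` setwise. If `F` has
exactly `k` connected components, then `E` has exactly `k` connected components, and `π`
restricted to each connected component of `E` is a fiber bundle over `B` whose fiber is the
corresponding connected component of `F`. -/
theorem components_of_fiberBundle_trivial_pi0_action {E B F : Type*} [TopologicalSpace E]
    [TopologicalSpace B] [TopologicalSpace F] [ConnectedSpace B] [LocallyConnectedSpace B]
    (π : E → B) (hπ : Continuous π) {ι : Type*}
    (U : ι → Set B) (hUo : ∀ i, IsOpen (U i)) (hUcov : ∀ b : B, ∃ i, b ∈ U i)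
    (e : ∀ i, (π ⁻¹' U i) ≃ₜ (U i) × F)
    (he : ∀ i (z : π ⁻¹' U i), ((e i z).1 : B) = π z)
    (htrans : ∀ i j (z : π ⁻¹' U i) (w : π ⁻¹' U j), (z : E) = (w : E) →
      connectedComponent ((e i z).2) = connectedComponent ((e j w).2))
    (k : ℕ) (hk : Nat.card (ConnectedComponents F) = k) :
    Nat.card (ConnectedComponents E) = k ∧
    ∀ z : E, ∃ f : F,
      IsFiberBundleWithFiber (↥(connectedComponent f))
        (fun w : ↥(connectedComponent z) => π (w : E)) := by
  set φ := fiberComponent hUcov e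
  have hφ : Continuous φ := continuous_fiberComponent htrans hπ hUo
  have hfib : ∀ x y, φ x = φ y → connectedComponent x = connectedComponent y :=
    fun _ _ => connectedComponent_eq_of_fiberComponent_eq htrans hUo he
  refine ⟨?_, fun z => ?_⟩
  · obtain ⟨b⟩ : Nonempty B := inferInstance
    have hsurj : Surjective φ := fun c => (exists_fiberComponent_eq_and_eq htrans he c b).imp
      fun _ => And.left
    rw [← hk]
    exact Nat.card_congr (Equiv.ofBijective _ (hφ.connectedComponentsLift_bijective hsurj hfib))
  · obtain ⟨f, hf⟩ := ConnectedComponents.surjective_coe (φ z)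
    refine ⟨f, isFiberBundleWithFiber_restrict hπ hUo hUcov e he fun i x => ?_⟩
    rw [hφ.connectedComponent_eq_preimage hfib z, mem_preimage, mem_singleton_iff, ← hf,
      fiberComponent_eq_coe_iff htrans]
end

section
/- Let X, Y be topological spaces, A ⊆ X and B ⊆ Y closed with dense complements, X and Y locally connected, and suppose h : X → Y is a homeomorphism with h(A) = B. Then the induced map h^N between the germ-construction normalizers N_X and N_Y is a homeomorphism satisfying n_Y ∘ h^N = h ∘ n_X. -/
open TopologicalSpace

/-- The set of connected components of a subset `S` of a topological space. -/
def comps {X : Type*} [TopologicalSpace X] (S : Set X) : Set (Set X) :=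
  {C | ∃ y ∈ S, C = connectedComponentIn S y}

/-- A point of the normalizer of `(X, A)`: a point `x ∈ X` together with a compatible
system `ξ` assigning to each open neighborhood `U` of `x` a connected component of
`U \ A` having `x` in its closure; compatibility means `ξ U ⊆ ξ V` whenever `U ⊆ V`. -/
structure NormPoint (X : Type*) [TopologicalSpace X] (A : Set X) where
  pt : X
  sys : Set X → Set X
  isComp : ∀ U : Set X, IsOpen U → pt ∈ U → sys U ∈ comps (U \ A)
  mem_closure : ∀ U : Set X, IsOpen U → pt ∈ U → pt ∈ closure (sys U)
  compat : ∀ U V : Set X, IsOpen U → IsOpen V → pt ∈ U → pt ∈ V → U ⊆ V → sys U ⊆ sys V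

/-- The basic open sets `Ũ_C` of the normalizer: for `U ⊆ X` open and `C` a connected
component of `U \ A`, the set of normalizer points `(x, ξ)` with `x ∈ U` and `ξ U = C`. -/
def normBasis (X : Type*) [TopologicalSpace X] (A : Set X) : Set (Set (NormPoint X A)) :=
  {B | ∃ (U : Set X) (C : Set X), IsOpen U ∧ C ∈ comps (U \ A) ∧
    B = {p : NormPoint X A | p.pt ∈ U ∧ p.sys U = C}}

/-- The normalizer topology, generated by the basic open sets `Ũ_C`. -/
instance (X : Type*) [TopologicalSpace X] (A : Set X) : TopologicalSpace (NormPoint X A) :=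
  generateFrom (normBasis X A)

open Set

/-! Open sets, the set `A`, closures and connected components are all transported by `h`, so
`h^N (x, ξ) = (h x, U ↦ h (ξ (h⁻¹ U)))` is again a normalizer point, it pulls basic open sets
back to basic open sets, and `(h⁻¹)^N` is its inverse. -/

theorem Homeomorph.image_mem_comps {X Y : Type*} [TopologicalSpace X] [TopologicalSpace Y]
    (h : X ≃ₜ Y) {S C : Set X} (hC : C ∈ comps S) : h '' C ∈ comps (h '' S) := by
  obtain ⟨y, hy, rfl⟩ := hC
  exact ⟨h y, mem_image_of_mem h hy, h.image_connectedComponentIn hy⟩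

theorem Homeomorph.image_preimage_diff {X Y : Type*} [TopologicalSpace X] [TopologicalSpace Y]
    (h : X ≃ₜ Y) (U : Set Y) (A : Set X) : h '' (h ⁻¹' U \ A) = U \ h '' A := by
  rw [image_sdiff h.injective, h.image_preimage]

theorem Homeomorph.image_eq_iff_eq_symm_image {X Y : Type*} [TopologicalSpace X]
    [TopologicalSpace Y] (h : X ≃ₜ Y) (S : Set X) (C : Set Y) : h '' S = C ↔ S = h.symm '' C := by
  rw [h.image_symm]
  exact ⟨fun hS => hS ▸ (h.preimage_image S).symm, fun hS => hS ▸ h.image_preimage C⟩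

namespace NormPoint

variable {X Y : Type*} [TopologicalSpace X] [TopologicalSpace Y] {A : Set X} {B : Set Y}

protected theorem ext {p q : NormPoint X A} (hpt : p.pt = q.pt) (hsys : p.sys = q.sys) :
    p = q := by
  cases p; cases q; cases hpt; cases hsys; rfl

def map (h : X ≃ₜ Y) (hAB : h '' A = B) (p : NormPoint X A) : NormPoint Y B where
  pt := h p.pt
  sys U := h '' p.sys (h ⁻¹' U)
  isComp U hU hx := by
    rw [← hAB, ← h.image_preimage_diff]
    exact h.image_mem_comps (p.isComp _ (hU.preimage h.continuous) hx)
  mem_closure U hU hx := by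
    rw [← h.image_closure]
    exact mem_image_of_mem h (p.mem_closure _ (hU.preimage h.continuous) hx)
  compat U V hU hV hxU hxV hUV := image_mono <|
    p.compat _ _ (hU.preimage h.continuous) (hV.preimage h.continuous) hxU hxV (preimage_mono hUV)

theorem map_symm_map (h : X ≃ₜ Y) (hAB : h '' A = B) (hBA : h.symm '' B = A)
    (p : NormPoint X A) : map h.symm hBA (map h hAB p) = p :=
  NormPoint.ext (h.symm_apply_apply p.pt) <| funext fun U => by
    simp only [map, h.preimage_symm, h.image_symm, h.preimage_image]

theorem preimage_map_basic (h : X ≃ₜ Y) (hAB : h '' A = B) (U C : Set Y) :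
    map h hAB ⁻¹' {q | q.pt ∈ U ∧ q.sys U = C} =
      {p | p.pt ∈ h ⁻¹' U ∧ p.sys (h ⁻¹' U) = h.symm '' C} := by
  ext p
  simp only [map, mem_preimage, mem_ofPred_eq, h.image_eq_iff_eq_symm_image]

theorem continuous_map (h : X ≃ₜ Y) (hAB : h '' A = B) : Continuous (map h hAB) := by
  rw [continuous_generateFrom_iff]
  rintro _ ⟨U, C, hU, hC, rfl⟩
  rw [preimage_map_basic]
  refine isOpen_generateFrom_of_mem ⟨h ⁻¹' U, h.symm '' C, hU.preimage h.continuous, ?_, rfl⟩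
  have hUB : h.symm '' (U \ B) = h ⁻¹' U \ A := by
    rw [← hAB, ← h.image_preimage_diff, h.image_symm, h.preimage_image]
  exact hUB ▸ h.symm.image_mem_comps hC

def homeomorph (h : X ≃ₜ Y) (hAB : h '' A = B) : NormPoint X A ≃ₜ NormPoint Y B :=
  have hBA : h.symm '' B = A := by rw [← hAB, h.image_symm, h.preimage_image]
  { toFun := map h hAB
    invFun := map h.symm hBA
    left_inv := map_symm_map h hAB hBA
    right_inv := map_symm_map h.symm hBA hAB
    continuous_toFun := continuous_map h hAB
    continuous_invFun := continuous_map h.symm hBA }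

end NormPoint

theorem normPoint_homeomorph_general (X Y : Type*) [TopologicalSpace X] [TopologicalSpace Y]
    (A : Set X) (B : Set Y) (h : X ≃ₜ Y) (hAB : h '' A = B) :
    ∃ hN : NormPoint X A ≃ₜ NormPoint Y B,
      ∀ p : NormPoint X A, (hN p).pt = h p.pt :=
  ⟨NormPoint.homeomorph h hAB, fun _ => rfl⟩

/-- a homeomorphism `h : X ≃ₜ Y` with `h '' A = B` induces a homeomorphism
`h^N : N_X ≃ₜ N_Y` of the germ-construction normalizers with `n_Y ∘ h^N = h ∘ n_X`. -/
theorem normPoint_homeomorph (X Y : Type*) [TopologicalSpace X] [TopologicalSpace Y]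
    [LocallyConnectedSpace X] [LocallyConnectedSpace Y]
    (A : Set X) (B : Set Y) (hA : IsClosed A) (hB : IsClosed B)
    (hdA : Dense Aᶜ) (hdB : Dense Bᶜ) (h : X ≃ₜ Y) (hAB : h '' A = B) :
    ∃ hN : NormPoint X A ≃ₜ NormPoint Y B,
      ∀ p : NormPoint X A, (hN p).pt = h p.pt :=
  normPoint_homeomorph_general X Y A B h hAB
end
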